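/- arXiv:2012.10104 — 8 statements merged into one kernel-verified Lean document; each statement's English description precedes it below -/
import Mathlib

section
/- Let V be a *-vector space with a downward filtered family of cones {C_α : α ∈ Γ}, each contained in the hermitian elements V_h, satisfying ⋂_α (C_α ∩ -C_α) = {0}, and let e be an Archimedean matrix order unit. For X ∈ M_n(V) define ‖X‖_α^n = inf { r ≥ 0 : [[r·e_n, X],[X*, r·e_n]] ∈ C_α^{2n} }. Then for each α and n, ‖·‖_α^n is a seminorm on M_n(V) satisfying ‖X*‖_α^n = ‖X‖_α^n, and the family {‖·‖_α^n : α ∈ Γ} is separating, i.e. ‖X‖_α^n = 0 for all α implies X = 0. -/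
open scoped ComplexOrder

noncomputable section

variable {V : Type} [AddCommGroup V] [Module ℂ V]

/-- Conjugation `Xᴴ A X` of a `V`-valued matrix by a scalar matrix `X`. -/
def sconj {n m : ℕ} (X : Matrix (Fin n) (Fin m) ℂ)
    (A : Matrix (Fin n) (Fin n) V) : Matrix (Fin m) (Fin m) V :=
  Matrix.of fun i j => ∑ p, ∑ q, ((starRingEnd ℂ) (X p i) * X q j) • A p q

/-- A (not necessarily proper) cone in a complex vector space. -/
def IsVCone {M : Type} [AddCommGroup M] [Module ℂ M] (C : Set M) : Prop :=
  (0 : M) ∈ C ∧ (∀ x ∈ C, ∀ y ∈ C, x + y ∈ C) ∧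
    ∀ r : ℝ, 0 ≤ r → ∀ x ∈ C, (r : ℂ) • x ∈ C

/-- A 2×2 block matrix of `n × n` blocks, reindexed to `Fin (n+n)`. -/
def blk {n : ℕ} (A B C D : Matrix (Fin n) (Fin n) V) :
    Matrix (Fin (n + n)) (Fin (n + n)) V :=
  Matrix.reindex finSumFinEquiv finSumFinEquiv (Matrix.fromBlocks A B C D)

/-- The diagonal matrix `diag (e, …, e)`. -/
def diagE (e : V) (n : ℕ) : Matrix (Fin n) (Fin n) V :=
  Matrix.diagonal fun _ => e

variable [StarAddMonoid V] [StarModule ℂ V]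

/-- The seminorm at level `(α, n)` induced by the matrix cones `C` and the unit `e`:
`‖X‖_α^n = inf { r ≥ 0 : [[r eₙ, X],[X*, r eₙ]] ∈ C_α^{2n} }`. -/
def nrm {Γ : Type} (C : Γ → (k : ℕ) → Set (Matrix (Fin k) (Fin k) V)) (e : V)
    (α : Γ) (n : ℕ) (X : Matrix (Fin n) (Fin n) V) : ℝ :=
  sInf {r : ℝ | 0 ≤ r ∧
    blk ((r : ℂ) • diagE e n) X (star X) ((r : ℂ) • diagE e n) ∈ C α (n + n)}

/-- A local matrix *-ordering on `V`: a downward filtered family of compatible matrix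
cones of hermitian matrices whose total intersection with their negatives is trivial. -/
structure LMOrder (Γ : Type) (V : Type) [AddCommGroup V] [Module ℂ V]
    [StarAddMonoid V] [StarModule ℂ V] where
  C : Γ → (n : ℕ) → Set (Matrix (Fin n) (Fin n) V)
  cone : ∀ α n, IsVCone (C α n)
  herm : ∀ α n, ∀ A ∈ C α n, star A = A
  filtered : ∀ α β : Γ, ∃ γ, ∀ n, C γ n ⊆ C α n ∩ C β n
  proper : ∀ n (A : Matrix (Fin n) (Fin n) V), (∀ α, A ∈ C α n ∧ -A ∈ C α n) → A = 0
  compat : ∀ (α : Γ) (n m : ℕ) (X : Matrix (Fin n) (Fin m) ℂ),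
    ∀ A ∈ C α n, sconj X A ∈ C α m

/-- An abstract local operator system: a local matrix *-ordering together with an
Archimedean matrix order unit. -/
structure LocalOpSys (Γ : Type) (V : Type) [AddCommGroup V] [Module ℂ V]
    [StarAddMonoid V] [StarModule ℂ V] extends LMOrder Γ V where
  e : V
  eherm : star e = e
  unit : ∀ (α : Γ) (n : ℕ) (A : Matrix (Fin n) (Fin n) V), star A = A →
    ∃ r : ℝ, 0 < r ∧ (r : ℂ) • diagE e n - A ∈ C α n
  arch : ∀ (α : Γ) (n : ℕ) (A : Matrix (Fin n) (Fin n) V),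
    (∀ r : ℝ, 0 < r → (r : ℂ) • diagE e n + A ∈ C α n) → A ∈ C α n

/-- An Archimedean local order unit space (`A.L.O.U.` space): ground-level cones only. -/
structure ALOU (Γ : Type) (V : Type) [AddCommGroup V] [Module ℂ V]
    [StarAddMonoid V] [StarModule ℂ V] where
  pos : Γ → Set V
  cone : ∀ α, IsVCone (pos α)
  herm : ∀ α, ∀ v ∈ pos α, star v = v
  filtered : ∀ α β : Γ, ∃ γ, pos γ ⊆ pos α ∩ pos β
  proper : ∀ v : V, (∀ α, v ∈ pos α ∧ -v ∈ pos α) → v = 0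
  e : V
  eherm : star e = e
  unit : ∀ (α : Γ) (v : V), star v = v → ∃ r : ℝ, 0 < r ∧ (r : ℂ) • e - v ∈ pos α
  arch : ∀ (α : Γ) (v : V), (∀ r : ℝ, 0 < r → (r : ℂ) • e + v ∈ pos α) → v ∈ pos α

/-- The minimal matrix cones over a family of ground-level cones. -/
def Cmin {Γ : Type} (pos : Γ → Set V) (α : Γ) (n : ℕ) :
    Set (Matrix (Fin n) (Fin n) V) :=
  {A | ∀ L : Fin n → ℂ, (∑ i, ∑ j, ((starRingEnd ℂ) (L i) * L j) • A i j) ∈ pos α}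

/-- The maximal matrix cones over a family of ground-level cones:
sums `Σ aᵢ ⊗ vᵢ` with `aᵢ` positive semidefinite scalar matrices and `vᵢ` positive. -/
def Dmax {Γ : Type} (pos : Γ → Set V) (α : Γ) (n : ℕ) :
    Set (Matrix (Fin n) (Fin n) V) :=
  {A | ∃ (k : ℕ) (a : Fin k → Matrix (Fin n) (Fin n) ℂ) (v : Fin k → V),
    (∀ i, (a i).PosSemidef) ∧ (∀ i, v i ∈ pos α) ∧
    A = Matrix.of fun p q => ∑ i, (a i p q) • v i}

/-- The amplification `φ⁽ᵏ⁾` of a matrix-valued linear map, realized on the index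
type `Fin k × ι`. -/
def ampP {S : Type} [AddCommGroup S] [Module ℂ S] {k : ℕ} {ι : Type} [Fintype ι]
    (φ : S →ₗ[ℂ] Matrix ι ι ℂ) (M : Matrix (Fin k) (Fin k) S) :
    Matrix (Fin k × ι) (Fin k × ι) ℂ :=
  Matrix.of fun ip jq => φ (M ip.1 jq.1) ip.2 jq.2

end

/-! `‖X‖_α` is the order-unit gauge of the self-adjoint dilation `H X = [[0, X], [X*, 0]]`, i.e.
`inf {r ≥ 0 : r e + H X ∈ C_α}`, and the Archimedean property makes this infimum attained.
Subadditivity then comes from adding the two witnesses. Conjugating by the block swap exchanges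
`X` and `X*`; conjugating by `diag (a, b)` with `conj a * b = c` and `|a|² = |b|² = |c|` turns a
witness for `X` at level `r` into one for `c • X` at level `|c| r`. If every `‖X‖_α` vanishes,
both `H X` and `H (-X) = -H X` lie in every cone, so properness forces `H X = 0`. -/

open Matrix ComplexConjugate

section BlockMatrices

variable {V : Type} {n : ℕ}

lemma blk_add [Add V] (A B C D A' B' C' D' : Matrix (Fin n) (Fin n) V) :
    blk A B C D + blk A' B' C' D' = blk (A + A') (B + B') (C + C') (D + D') := by
  rw [blk, blk, blk, ← fromBlocks_add]
  rfl

lemma blk_smul [SMul ℂ V] (c : ℂ) (A B C D : Matrix (Fin n) (Fin n) V) :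
    c • blk A B C D = blk (c • A) (c • B) (c • C) (c • D) := by
  rw [blk, blk, ← fromBlocks_smul]
  rfl

lemma blk_neg [Neg V] (A B C D : Matrix (Fin n) (Fin n) V) :
    -blk A B C D = blk (-A) (-B) (-C) (-D) := by
  rw [blk, blk, ← fromBlocks_neg]
  rfl

lemma blk_zero [Zero V] : blk (0 : Matrix (Fin n) (Fin n) V) 0 0 0 = 0 := by
  rw [blk, fromBlocks_zero]
  rfl

lemma blk_inj {A B C D A' B' C' D' : Matrix (Fin n) (Fin n) V} :
    blk A B C D = blk A' B' C' D' ↔ A = A' ∧ B = B' ∧ C = C' ∧ D = D' := by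
  simp only [blk, EmbeddingLike.apply_eq_iff_eq, fromBlocks_inj]

lemma diagE_add_self [AddCommGroup V] (e : V) :
    diagE e (n + n) = blk (diagE e n) 0 0 (diagE e n) := by
  simp only [blk, diagE, fromBlocks_diagonal, reindex_apply, submatrix_diagonal_equiv,
    Sum.elim_lam_const_lam_const]
  rfl

def blockSwap (n : ℕ) : Equiv.Perm (Fin (n + n)) :=
  finSumFinEquiv.symm.trans ((Equiv.sumComm _ _).trans finSumFinEquiv)

lemma blk_submatrix_blockSwap (A B C D : Matrix (Fin n) (Fin n) V) :
    (blk A B C D).submatrix (blockSwap n) (blockSwap n) = blk D C B A := by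
  have h : finSumFinEquiv.symm ∘ blockSwap n = Sum.swap ∘ finSumFinEquiv.symm := by
    ext i
    simp [blockSwap]
  rw [blk, blk, reindex_apply, reindex_apply, submatrix_submatrix, h,
    ← submatrix_submatrix, fromBlocks_submatrix_sum_swap_sum_swap]

lemma star_blk [Star V] (A B C D : Matrix (Fin n) (Fin n) V) :
    star (blk A B C D) = blk (star A) (star C) (star B) (star D) := by
  simp only [blk, reindex_apply, star_eq_conjTranspose, conjTranspose_submatrix,
    fromBlocks_conjTranspose]

lemma sconj_one_submatrix [AddCommGroup V] [Module ℂ V] {m : ℕ} (f : Fin m → Fin n)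
    (A : Matrix (Fin n) (Fin n) V) :
    sconj ((1 : Matrix (Fin n) (Fin n) ℂ).submatrix id f) A = A.submatrix f f := by
  ext i j
  simp [sconj, one_apply, ite_smul]

lemma sconj_diagonal [AddCommGroup V] [Module ℂ V] (d : Fin n → ℂ)
    (A : Matrix (Fin n) (Fin n) V) :
    sconj (diagonal d) A = of fun i j => (conj (d i) * d j) • A i j := by
  ext i j
  simp [sconj, diagonal_apply, apply_ite (starRingEnd ℂ), ite_mul, ite_smul]

lemma sconj_diagonal_blk [AddCommGroup V] [Module ℂ V] (a b : ℂ)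
    (A B C D : Matrix (Fin n) (Fin n) V) :
    sconj (diagonal fun i => Sum.elim (fun _ => a) (fun _ => b) (finSumFinEquiv.symm i))
        (blk A B C D) =
      blk ((conj a * a) • A) ((conj a * b) • B) ((conj b * a) • C) ((conj b * b) • D) := by
  rw [sconj_diagonal]
  ext i j
  obtain ⟨i, rfl⟩ := finSumFinEquiv.surjective i
  obtain ⟨j, rfl⟩ := finSumFinEquiv.surjective j
  rcases i with i | i <;> rcases j with j | j <;>
    simp [blk, -finSumFinEquiv_apply_left, -finSumFinEquiv_apply_right]

end BlockMatrices

lemma Complex.exists_conj_mul_eq (c : ℂ) :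
    ∃ a b : ℂ, conj a * a = ‖c‖ ∧ conj b * b = ‖c‖ ∧ conj a * b = c := by
  rcases eq_or_ne c 0 with rfl | hc
  · exact ⟨0, 0, by simp⟩
  set a : ℂ := ((√‖c‖ : ℝ) : ℂ)
  have hca : conj a = a := Complex.conj_ofReal _
  have ha : conj a * a = ‖c‖ := by
    rw [hca, ← Complex.ofReal_mul, Real.mul_self_sqrt (norm_nonneg c)]
  have ha0 : a ≠ 0 := Complex.ofReal_ne_zero.2 (Real.sqrt_ne_zero'.2 (norm_pos_iff.2 hc))
  refine ⟨a, c / a, ha, ?_, ?_⟩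
  · calc conj (c / a) * (c / a) = conj c * c / (conj a * a) := by rw [map_div₀]; ring
      _ = ‖c‖ := by rw [Complex.conj_mul', ha]; field_simp
  · rw [hca]
    field_simp

section OrderUnitGauge

variable {M : Type} [AddCommGroup M] [Module ℂ M]

def gaugeSet (C : Set M) (u x : M) : Set ℝ :=
  {r | 0 ≤ r ∧ (r : ℂ) • u + x ∈ C}

variable {C : Set M} {u x : M}

lemma mem_gaugeSet_of_le (hC : IsVCone C) (hu : u ∈ C) {r s : ℝ} (hr : r ∈ gaugeSet C u x)
    (hrs : r ≤ s) : s ∈ gaugeSet C u x := by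
  refine ⟨hr.1.trans hrs, ?_⟩
  have h : (s : ℂ) • u + x = ((s - r : ℝ) : ℂ) • u + ((r : ℂ) • u + x) := by
    push_cast
    rw [sub_smul]
    abel
  rw [h]
  exact hC.2.1 _ (hC.2.2 _ (sub_nonneg.2 hrs) _ hu) _ hr.2

lemma sInf_mem_gaugeSet (hC : IsVCone C) (hu : u ∈ C)
    (harch : ∀ y, (∀ s : ℝ, 0 < s → (s : ℂ) • u + y ∈ C) → y ∈ C)
    (hne : (gaugeSet C u x).Nonempty) : sInf (gaugeSet C u x) ∈ gaugeSet C u x := by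
  refine ⟨Real.sInf_nonneg fun _ hr => hr.1, harch _ fun s hs => ?_⟩
  obtain ⟨r, hr, hlt⟩ := exists_lt_of_csInf_lt hne (lt_add_of_pos_right _ hs)
  have h := (mem_gaugeSet_of_le hC hu hr hlt.le).2
  rwa [Complex.ofReal_add, add_smul, add_comm (_ • u), add_assoc] at h

lemma sInf_gaugeSet_add_le (hC : IsVCone C) (hu : u ∈ C)
    (harch : ∀ y, (∀ s : ℝ, 0 < s → (s : ℂ) • u + y ∈ C) → y ∈ C) {y : M}
    (hx : (gaugeSet C u x).Nonempty) (hy : (gaugeSet C u y).Nonempty) :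
    sInf (gaugeSet C u (x + y)) ≤ sInf (gaugeSet C u x) + sInf (gaugeSet C u y) := by
  obtain ⟨hx0, hxC⟩ := sInf_mem_gaugeSet hC hu harch hx
  obtain ⟨hy0, hyC⟩ := sInf_mem_gaugeSet hC hu harch hy
  refine csInf_le ⟨0, fun _ hr => hr.1⟩ ⟨add_nonneg hx0 hy0, ?_⟩
  convert hC.2.1 _ hxC _ hyC using 1
  push_cast
  rw [add_smul]
  abel

end OrderUnitGauge

section Seminorm

variable {V : Type} [AddCommGroup V] [StarAddMonoid V] {n : ℕ}

def selfAdjointDilation (X : Matrix (Fin n) (Fin n) V) : Matrix (Fin (n + n)) (Fin (n + n)) V :=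
  blk 0 X (star X) 0

lemma star_selfAdjointDilation (X : Matrix (Fin n) (Fin n) V) :
    star (selfAdjointDilation X) = selfAdjointDilation X := by
  rw [selfAdjointDilation, star_blk, star_star, star_zero]

lemma selfAdjointDilation_add (X Y : Matrix (Fin n) (Fin n) V) :
    selfAdjointDilation (X + Y) = selfAdjointDilation X + selfAdjointDilation Y := by
  rw [selfAdjointDilation, selfAdjointDilation, selfAdjointDilation, blk_add, star_add,
    add_zero]

lemma selfAdjointDilation_neg (X : Matrix (Fin n) (Fin n) V) :
    selfAdjointDilation (-X) = -selfAdjointDilation X := by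
  rw [selfAdjointDilation, selfAdjointDilation, blk_neg, star_neg, neg_zero]

lemma selfAdjointDilation_eq_zero_iff {X : Matrix (Fin n) (Fin n) V} :
    selfAdjointDilation X = 0 ↔ X = 0 := by
  rw [selfAdjointDilation, ← blk_zero, blk_inj]
  simp

variable [Module ℂ V]

lemma blk_smul_diagE (c : ℂ) (e : V) (X : Matrix (Fin n) (Fin n) V) :
    blk (c • diagE e n) X (star X) (c • diagE e n) =
      c • diagE e (n + n) + selfAdjointDilation X := by
  rw [diagE_add_self, blk_smul, selfAdjointDilation, blk_add]
  simp only [smul_zero, add_zero, zero_add]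

variable {Γ : Type} (C : Γ → (k : ℕ) → Set (Matrix (Fin k) (Fin k) V)) (e : V) (α : Γ)

lemma nrm_eq_sInf_gaugeSet (X : Matrix (Fin n) (Fin n) V) :
    nrm C e α n X = sInf (gaugeSet (C α (n + n)) (diagE e (n + n)) (selfAdjointDilation X)) := by
  simp only [nrm, gaugeSet, blk_smul_diagE]

lemma nrm_nonneg (X : Matrix (Fin n) (Fin n) V) : 0 ≤ nrm C e α n X :=
  Real.sInf_nonneg fun _ hr => hr.1

lemma nrm_le_of_mem {X : Matrix (Fin n) (Fin n) V} {r : ℝ} (hr : 0 ≤ r)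
    (h : blk ((r : ℂ) • diagE e n) X (star X) ((r : ℂ) • diagE e n) ∈ C α (n + n)) :
    nrm C e α n X ≤ r :=
  csInf_le ⟨0, fun _ hs => hs.1⟩ ⟨hr, h⟩

end Seminorm

namespace LocalOpSys

variable {Γ V : Type} [AddCommGroup V] [Module ℂ V] [StarAddMonoid V] [StarModule ℂ V]
  (S : LocalOpSys Γ V) (α : Γ) {n : ℕ}

lemma diagE_mem (n : ℕ) : diagE S.e n ∈ S.C α n := by
  have hE : star (-diagE S.e n) = -diagE S.e n := by
    rw [star_neg, diagE, star_eq_conjTranspose, diagonal_conjTranspose, Pi.star_def, S.eherm]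
  obtain ⟨r, hr, h⟩ := S.unit α n _ hE
  have h1 : ((r + 1 : ℝ) : ℂ) • diagE S.e n ∈ S.C α n := by
    convert h using 1
    push_cast
    rw [add_smul, one_smul, sub_neg_eq_add]
  have h2 := (S.cone α n).2.2 (r + 1)⁻¹ (by positivity) _ h1
  rwa [smul_smul, ← Complex.ofReal_mul, inv_mul_cancel₀ (by positivity), Complex.ofReal_one,
    one_smul] at h2

lemma gaugeSet_nonempty (X : Matrix (Fin n) (Fin n) V) :
    (gaugeSet (S.C α (n + n)) (diagE S.e (n + n)) (selfAdjointDilation X)).Nonempty := by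
  have hH : star (-selfAdjointDilation X) = -selfAdjointDilation X := by
    rw [star_neg, star_selfAdjointDilation]
  obtain ⟨r, hr, h⟩ := S.unit α (n + n) _ hH
  exact ⟨r, hr.le, by rwa [sub_neg_eq_add] at h⟩

lemma nrm_mem (X : Matrix (Fin n) (Fin n) V) :
    blk ((nrm S.C S.e α n X : ℂ) • diagE S.e n) X (star X)
      ((nrm S.C S.e α n X : ℂ) • diagE S.e n) ∈ S.C α (n + n) := by
  rw [blk_smul_diagE, nrm_eq_sInf_gaugeSet]
  exact (sInf_mem_gaugeSet (S.cone α _) (S.diagE_mem α _) (S.arch α _)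
    (S.gaugeSet_nonempty α X)).2

lemma nrm_add_le (X Y : Matrix (Fin n) (Fin n) V) :
    nrm S.C S.e α n (X + Y) ≤ nrm S.C S.e α n X + nrm S.C S.e α n Y := by
  simp only [nrm_eq_sInf_gaugeSet, selfAdjointDilation_add]
  exact sInf_gaugeSet_add_le (S.cone α _) (S.diagE_mem α _) (S.arch α _)
    (S.gaugeSet_nonempty α X) (S.gaugeSet_nonempty α Y)

lemma submatrix_mem {m : ℕ} (f : Fin m → Fin n) {A : Matrix (Fin n) (Fin n) V}
    (hA : A ∈ S.C α n) : A.submatrix f f ∈ S.C α m := by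
  rw [← sconj_one_submatrix]
  exact S.compat α n m _ A hA

lemma nrm_star_le (X : Matrix (Fin n) (Fin n) V) :
    nrm S.C S.e α n (star X) ≤ nrm S.C S.e α n X := by
  refine nrm_le_of_mem _ _ _ (nrm_nonneg _ _ _ _) ?_
  rw [star_star, ← blk_submatrix_blockSwap]
  exact S.submatrix_mem α _ (S.nrm_mem α X)

lemma nrm_star (X : Matrix (Fin n) (Fin n) V) :
    nrm S.C S.e α n (star X) = nrm S.C S.e α n X :=
  le_antisymm (S.nrm_star_le α X) (by simpa using S.nrm_star_le α (star X))

lemma nrm_smul_le (c : ℂ) (X : Matrix (Fin n) (Fin n) V) :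
    nrm S.C S.e α n (c • X) ≤ ‖c‖ * nrm S.C S.e α n X := by
  obtain ⟨a, b, ha, hb, hab⟩ := Complex.exists_conj_mul_eq c
  have hba : conj b * a = conj c := by rw [← hab, map_mul, Complex.conj_conj, mul_comm]
  refine nrm_le_of_mem _ _ _ (mul_nonneg (norm_nonneg c) (nrm_nonneg _ _ _ _)) ?_
  have h := S.compat α _ _
    (diagonal fun i => Sum.elim (fun _ => a) (fun _ => b) (finSumFinEquiv.symm i)) _
    (S.nrm_mem α X)
  rw [sconj_diagonal_blk, ha, hb, hab, hba, smul_smul] at h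
  rwa [star_smul, Complex.star_def, Complex.ofReal_mul]

lemma nrm_smul (c : ℂ) (X : Matrix (Fin n) (Fin n) V) :
    nrm S.C S.e α n (c • X) = ‖c‖ * nrm S.C S.e α n X := by
  refine le_antisymm (S.nrm_smul_le α c X) ?_
  rcases eq_or_ne c 0 with rfl | hc
  · simp [nrm_nonneg]
  have h := S.nrm_smul_le α c⁻¹ (c • X)
  rwa [inv_smul_smul₀ hc, norm_inv, le_inv_mul_iff₀ (norm_pos_iff.2 hc)] at h

lemma nrm_neg (X : Matrix (Fin n) (Fin n) V) : nrm S.C S.e α n (-X) = nrm S.C S.e α n X := by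
  rw [← neg_one_smul ℂ X, S.nrm_smul, norm_neg, norm_one, one_mul]

lemma selfAdjointDilation_mem_of_nrm_eq_zero {X : Matrix (Fin n) (Fin n) V}
    (h : nrm S.C S.e α n X = 0) : selfAdjointDilation X ∈ S.C α (n + n) := by
  have hX := S.nrm_mem α X
  rwa [blk_smul_diagE, h, Complex.ofReal_zero, zero_smul, zero_add] at hX

lemma eq_zero_of_forall_nrm_eq_zero {X : Matrix (Fin n) (Fin n) V}
    (h : ∀ α, nrm S.C S.e α n X = 0) : X = 0 := by
  rw [← selfAdjointDilation_eq_zero_iff]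
  refine S.proper _ _ fun α => ⟨S.selfAdjointDilation_mem_of_nrm_eq_zero α (h α), ?_⟩
  rw [← selfAdjointDilation_neg]
  exact S.selfAdjointDilation_mem_of_nrm_eq_zero α (by rw [S.nrm_neg, h α])

end LocalOpSys

/-- the cone-induced matrix seminorms of a local operator system form a
separating family of *-seminorms. -/
theorem statement0 {Γ V : Type} [AddCommGroup V] [Module ℂ V] [StarAddMonoid V]
    [StarModule ℂ V] (S : LocalOpSys Γ V) :
    (∀ (α : Γ) (n : ℕ) (X Y : Matrix (Fin n) (Fin n) V),
        nrm S.C S.e α n (X + Y) ≤ nrm S.C S.e α n X + nrm S.C S.e α n Y) ∧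
    (∀ (α : Γ) (n : ℕ) (c : ℂ) (X : Matrix (Fin n) (Fin n) V),
        nrm S.C S.e α n (c • X) = ‖c‖ * nrm S.C S.e α n X) ∧
    (∀ (α : Γ) (n : ℕ) (X : Matrix (Fin n) (Fin n) V), 0 ≤ nrm S.C S.e α n X) ∧
    (∀ (α : Γ) (n : ℕ) (X : Matrix (Fin n) (Fin n) V),
        nrm S.C S.e α n (star X) = nrm S.C S.e α n X) ∧
    (∀ (n : ℕ) (X : Matrix (Fin n) (Fin n) V),
        (∀ α : Γ, nrm S.C S.e α n X = 0) → X = 0) :=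
  ⟨fun α _ X Y => S.nrm_add_le α X Y, fun α _ c X => S.nrm_smul α c X,
    fun α _ X => nrm_nonneg S.C S.e α X, fun α _ X => S.nrm_star α X,
    fun _ _ h => S.eq_zero_of_forall_nrm_eq_zero h⟩
end

section
/- Let (V, {V_α^+}, e) be an Archimedean local order unit space and let W be a local matrix *-ordered vector space. Every local positive linear map φ : W → LOMIN(V) is automatically completely local positive: for each α there exists β such that φ^{(n)} maps the n-th matrix cone of W at level β into (C_α^n)^min(V) for all n ∈ ℕ. -/
open scoped ComplexOrder

theorem sconj_replicateCol {W : Type} [AddCommGroup W] [Module ℂ W] {n : ℕ} (L : Fin n → ℂ)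
    (M : Matrix (Fin n) (Fin n) W) :
    sconj (Matrix.replicateCol (Fin 1) L) M =
      Matrix.of fun _ _ => ∑ p, ∑ q, ((starRingEnd ℂ) (L p) * L q) • M p q :=
  rfl

theorem LMOrder.quadForm_mem {Λ W : Type} [AddCommGroup W] [Module ℂ W] [StarAddMonoid W]
    [StarModule ℂ W] (Wo : LMOrder Λ W) {β : Λ} {n : ℕ} {M : Matrix (Fin n) (Fin n) W}
    (hM : M ∈ Wo.C β n) (L : Fin n → ℂ) :
    (Matrix.of fun _ _ => ∑ p, ∑ q, ((starRingEnd ℂ) (L p) * L q) • M p q :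
      Matrix (Fin 1) (Fin 1) W) ∈ Wo.C β 1 :=
  sconj_replicateCol L M ▸ Wo.compat β n 1 _ M hM

/-- every local positive map from a local matrix *-ordered vector space
into `LOMIN(V)` is completely local positive. -/
theorem statement6 {Γ Λ V W : Type} [AddCommGroup V] [Module ℂ V] [StarAddMonoid V]
    [StarModule ℂ V] [AddCommGroup W] [Module ℂ W] [StarAddMonoid W] [StarModule ℂ W]
    (A : ALOU Γ V) (Wo : LMOrder Λ W) (φ : W →ₗ[ℂ] V)
    (hφ : ∀ α : Γ, ∃ β : Λ, ∀ w : W,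
      (Matrix.of fun _ _ => w : Matrix (Fin 1) (Fin 1) W) ∈ Wo.C β 1 → φ w ∈ A.pos α) :
    ∀ α : Γ, ∃ β : Λ, ∀ (n : ℕ) (M : Matrix (Fin n) (Fin n) W),
      M ∈ Wo.C β n → M.map φ ∈ Cmin A.pos α n := by
  intro α
  obtain ⟨β, hβ⟩ := hφ α
  refine ⟨β, fun n M hM L => ?_⟩
  have hφL : φ (∑ p, ∑ q, ((starRingEnd ℂ) (L p) * L q) • M p q) =
      ∑ p, ∑ q, ((starRingEnd ℂ) (L p) * L q) • M.map φ p q := by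
    simp only [map_sum, map_smul, Matrix.map_apply]
  exact hφL ▸ hβ _ (Wo.quadForm_mem hM L)
end

section
/- Let (V, {C_α^n : α ∈ Γ}, e) be any local operator system whose first-level cones satisfy C_α^1 = V_α^+ for all α. Then C_α^n ⊆ (C_α^n)^min(V) for all n ∈ ℕ and all α ∈ Γ, i.e. LOMIN is the largest (weakest-ordered / minimal) local operator system structure with the given ground-level cones. -/
open scoped ComplexOrder

theorem sconj_col {V : Type} [AddCommGroup V] [Module ℂ V] {n : ℕ} (L : Fin n → ℂ)
    (A : Matrix (Fin n) (Fin n) V) :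
    sconj (Matrix.of fun i (_ : Fin 1) => L i) A =
      Matrix.of fun _ _ => ∑ i, ∑ j, ((starRingEnd ℂ) (L i) * L j) • A i j := by
  ext
  simp [sconj]

theorem LMOrder.C_subset_Cmin {Γ V : Type} [AddCommGroup V] [Module ℂ V] [StarAddMonoid V]
    [StarModule ℂ V] (O : LMOrder Γ V) (α : Γ) (n : ℕ) :
    O.C α n ⊆ Cmin (fun α' => {v : V |
      (Matrix.of fun _ _ => v : Matrix (Fin 1) (Fin 1) V) ∈ O.C α' 1}) α n := by
  intro A hA L
  change _ ∈ O.C α 1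
  exact sconj_col L A ▸ O.compat α n 1 _ A hA

/-- if a local operator system has ground-level cones `C_α^1 = V_α⁺`,
then every matrix cone is contained in the corresponding minimal cone; i.e. LOMIN is
the largest local operator system structure with the given ground-level cones. -/
theorem statement7 {Γ V : Type} [AddCommGroup V] [Module ℂ V] [StarAddMonoid V]
    [StarModule ℂ V] (S : LocalOpSys Γ V) :
    ∀ (α : Γ) (n : ℕ), S.C α n ⊆
      Cmin (fun α' => {v : V |
        (Matrix.of fun _ _ => v : Matrix (Fin 1) (Fin 1) V) ∈ S.C α' 1}) α n :=
  S.C_subset_Cmin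
end

section
/- Let (V, {V_α^+}, e) be an Archimedean local order unit space. Then for all n and α, (D_α^n)^max(V) = { γ · diag(v_1,…,v_m) · γ* : γ ∈ M_{n,m}(ℂ), v_i ∈ V_α^+, m ∈ ℕ }, where (D_α^n)^max(V) = { Σ_{i=1}^k a_i ⊗ v_i : a_i ∈ M_n(ℂ)^+, v_i ∈ V_α^+ }. -/
open scoped ComplexOrder

/-!
A positive semidefinite scalar matrix is a sum of rank-one matrices `w wᴴ`, so each term
`a ⊗ v` of a sum in `(D_α^n)^max` splits into terms `(w wᴴ) ⊗ v`; collecting all the columns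
`w` into one matrix `γ` gives `γ · diag(v, …, v, …) · γ*`. Conversely each column of `γ`
contributes the rank-one positive term `(γ eᵢ)(γ eᵢ)* ⊗ vᵢ`.
-/

open Matrix

section ConjDiagonal

variable {V : Type} [AddCommGroup V] [Module ℂ V] {ι κ κ' : Type} [Fintype κ] [Fintype κ']

/-- `γ · diag(v) · γ*` for a scalar matrix `γ` and a family `v` of vectors. -/
def conjDiagonal (g : Matrix ι κ ℂ) (v : κ → V) : Matrix ι ι V :=
  of fun p q => ∑ i, (g p i * starRingEnd ℂ (g q i)) • v i

theorem conjDiagonal_submatrix_equiv (g : Matrix ι κ ℂ) (v : κ → V) (e : κ' ≃ κ) :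
    conjDiagonal (g.submatrix id e) (v ∘ e) = conjDiagonal g v := by
  ext p q
  exact e.sum_comp fun i => (g p i * starRingEnd ℂ (g q i)) • v i

theorem conjDiagonal_eq_sum_vecMulVec_smul (g : Matrix ι κ ℂ) (v : κ → V) :
    conjDiagonal g v =
      of fun p q => ∑ i, vecMulVec (fun r => g r i) (star fun r => g r i) p q • v i :=
  rfl

theorem conjDiagonal_sigma {k : Type} [Fintype k] {m : k → Type} [∀ i, Fintype (m i)]
    (w : (i : k) → m i → ι → ℂ) (v : k → V) :
    conjDiagonal (of fun p (x : Σ i, m i) => w x.1 x.2 p) (fun x => v x.1) =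
      of fun p q => ∑ i, (∑ r, vecMulVec (w i r) (star (w i r))) p q • v i := by
  ext p q
  simp only [conjDiagonal, of_apply, Fintype.sum_sigma, Matrix.sum_apply, Finset.sum_smul,
    vecMulVec_apply, starRingEnd_apply, Pi.star_apply]

end ConjDiagonal

/-- for an Archimedean local order unit space,
`(D_α^n)^max = { γ diag(v₁,…,v_m) γ* : γ ∈ M_{n,m}(ℂ), vᵢ ∈ V_α⁺ }`. -/
theorem statement9 {Γ V : Type} [AddCommGroup V] [Module ℂ V] [StarAddMonoid V]
    [StarModule ℂ V] (A : ALOU Γ V) :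
    ∀ (α : Γ) (n : ℕ), Dmax A.pos α n =
      {M : Matrix (Fin n) (Fin n) V |
        ∃ (m : ℕ) (g : Matrix (Fin n) (Fin m) ℂ) (v : Fin m → V),
          (∀ i, v i ∈ A.pos α) ∧
          M = Matrix.of fun p q => ∑ i, (g p i * (starRingEnd ℂ) (g q i)) • v i} := by
  intro α n
  ext M
  constructor
  · rintro ⟨k, a, v, ha, hv, rfl⟩
    choose m w hw using fun i => posSemidef_iff_eq_sum_vecMulVec.mp (ha i)
    let e := Fintype.equivFin (Σ i, Fin (m i))
    have hM := (conjDiagonal_submatrix_equiv (of fun p (x : Σ i, Fin (m i)) => w x.1 x.2 p)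
      (fun x => v x.1) e.symm).trans (conjDiagonal_sigma w v)
    simp only [← hw] at hM
    exact ⟨_, _, _, fun j => hv _, hM.symm⟩
  · rintro ⟨m, g, v, hv, rfl⟩
    exact ⟨m, fun i => vecMulVec (fun p => g p i) (star fun p => g p i), v,
      fun i => posSemidef_vecMulVec_self_star _, hv, conjDiagonal_eq_sum_vecMulVec_smul g v⟩
end

section
/- Let S be a local operator system contained in a unital Pro-C*-algebra A, and let φ : S → ℂ be a local positive linear functional. Then φ extends to a local positive linear functional Φ on all of A, with Φ(1) = φ(1). -/
open scoped ComplexOrder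

/-!
The hermitian elements of `A` carry the real cone `P = {a | [a] ∈ C_α}`, for which `1` is an order
unit. Hence a positive functional `φ` on `S` is real on hermitian elements, and `re ∘ φ` only sees
real parts. By M. Riesz's extension theorem (the order unit makes `S` cofinal), `re ∘ φ` extends to
a real functional `g` on `A` that is nonnegative on the cone `{x | ℜ x ∈ P}`. The complexification
`x ↦ g x - i g (i x)` extends `φ`, and it is real on `P`: for hermitian `a` both `i a` and `-i a`
have real part `0`, so they lie in the cone and `g (i a) = 0`.
-/

open scoped ComplexStarModule

lemma Complex.nonneg_iff_exists_ofReal {z : ℂ} : 0 ≤ z ↔ ∃ t : ℝ, 0 ≤ t ∧ z = t := by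
  rw [RCLike.nonneg_iff_exists_ofReal]
  simp [eq_comm]

section ComplexModule

variable {V : Type*} [AddCommGroup V] [Module ℂ V]

lemma extendRCLike_apply_eq {S : Submodule ℂ V} (φ : S →ₗ[ℂ] ℂ) (g : V →ₗ[ℝ] ℝ)
    (hg : ∀ a : S, g a = (φ a).re) (a : S) : Module.Dual.extendRCLike g (a : V) = φ a := by
  have hI : g (Complex.I • (a : V)) = -(φ a).im := by simpa using hg (Complex.I • a)
  apply Complex.ext <;> simp [Module.Dual.extendRCLike_apply, hg a, hI]

variable [StarAddMonoid V]

def PointedCone.IsOrderUnit (P : PointedCone ℝ V) (e : V) : Prop :=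
  ∀ v : V, IsSelfAdjoint v → ∃ r : ℝ, 0 < r ∧ r • e - v ∈ P

lemma PointedCone.IsOrderUnit.mem {P : PointedCone ℝ V} {e : V} (hu : P.IsOrderUnit e) :
    e ∈ P := by
  obtain ⟨r, hr, he⟩ := hu 0 (.zero V)
  rw [sub_zero] at he
  have := P.smul_mem (inv_nonneg.2 hr.le) he
  rwa [smul_smul, inv_mul_cancel₀ hr.ne', one_smul] at this

lemma im_map_eq_zero_of_isSelfAdjoint {P : PointedCone ℝ V} {e : V} (hu : P.IsOrderUnit e)
    {S : Submodule ℂ V} (heS : e ∈ S) {φ : S →ₗ[ℂ] ℂ} (hφ : ∀ a : S, (a : V) ∈ P → 0 ≤ φ a)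
    (a : S) (ha : IsSelfAdjoint (a : V)) : (φ a).im = 0 := by
  obtain ⟨r, -, hr⟩ := hu _ ha.neg
  rw [sub_neg_eq_add, ← Complex.coe_smul] at hr
  have hshift := (Complex.nonneg_iff.1 (hφ ((r : ℂ) • ⟨e, heS⟩ + a) hr)).2
  have he := (Complex.nonneg_iff.1 (hφ ⟨e, heS⟩ hu.mem)).2
  rw [map_add, map_smul, smul_eq_mul, Complex.add_im, Complex.im_ofReal_mul, ← he, mul_zero,
    zero_add] at hshift
  exact hshift.symm

variable [StarModule ℂ V]

lemma realPart_mem {S : Submodule ℂ V} (hS : ∀ a ∈ S, star a ∈ S) {a : V} (ha : a ∈ S) :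
    (ℜ a : V) ∈ S := by
  rw [realPart_apply_coe]
  exact S.smul_of_tower_mem _ (S.add_mem ha (hS a ha))

lemma imaginaryPart_mem {S : Submodule ℂ V} (hS : ∀ a ∈ S, star a ∈ S) {a : V} (ha : a ∈ S) :
    (ℑ a : V) ∈ S := by
  rw [imaginaryPart_apply_coe]
  exact S.smul_mem _ (S.smul_of_tower_mem _ (S.sub_mem ha (hS a ha)))

lemma re_map_realPart {S : Submodule ℂ V} (hS : ∀ a ∈ S, star a ∈ S) {φ : S →ₗ[ℂ] ℂ}
    (hreal : ∀ a : S, IsSelfAdjoint (a : V) → (φ a).im = 0) (a : S) :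
    (φ ⟨ℜ (a : V), realPart_mem hS a.2⟩).re = (φ a).re := by
  have hdecomp : φ a = φ ⟨ℜ (a : V), realPart_mem hS a.2⟩ +
      Complex.I * φ ⟨ℑ (a : V), imaginaryPart_mem hS a.2⟩ := by
    rw [← smul_eq_mul, ← map_smul, ← map_add]
    exact congrArg φ (Subtype.ext (realPart_add_I_smul_imaginaryPart (a : V)).symm)
  simp [hdecomp, hreal ⟨_, imaginaryPart_mem hS a.2⟩ (selfAdjoint.mem_iff.1 (ℑ (a : V)).2)]

theorem exists_nonneg_extension {P : PointedCone ℝ V} (hP : ∀ p ∈ P, IsSelfAdjoint p) {e : V}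
    (hu : P.IsOrderUnit e) {S : Submodule ℂ V} (heS : e ∈ S) (hS : ∀ a ∈ S, star a ∈ S)
    (φ : S →ₗ[ℂ] ℂ) (hφ : ∀ a : S, (a : V) ∈ P → 0 ≤ φ a) :
    ∃ Φ : V →ₗ[ℂ] ℂ, (∀ a : S, Φ a = φ a) ∧ ∀ a ∈ P, 0 ≤ Φ a := by
  have hreal := im_map_eq_zero_of_isSelfAdjoint hu heS hφ
  let s : PointedCone ℝ V := P.comap ((selfAdjoint.submodule ℝ V).subtype ∘ₗ realPart)
  have hs : ∀ x, x ∈ s ↔ (ℜ x : V) ∈ P := fun x => Iff.rfl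
  let f : V →ₗ.[ℝ] ℝ := ⟨S.restrictScalars ℝ, Complex.reLm ∘ₗ φ.restrictScalars ℝ⟩
  have hnonneg : ∀ x : f.domain, (x : V) ∈ s → 0 ≤ f x := by
    intro x hx
    change 0 ≤ (φ x).re
    rw [← re_map_realPart hS hreal x]
    exact (Complex.nonneg_iff.1 (hφ ⟨_, realPart_mem hS x.2⟩ hx)).1
  have hdense : ∀ y : V, ∃ x : f.domain, (x : V) + y ∈ s := by
    intro y
    obtain ⟨r, -, hr⟩ := hu _ (ℜ y).2.neg
    refine ⟨⟨r • e, S.smul_of_tower_mem r heS⟩, ?_⟩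
    rw [hs]
    simpa [(hP e hu.mem).coe_realPart] using hr
  obtain ⟨g, hgf, hg⟩ := riesz_extension s f hnonneg hdense
  refine ⟨Module.Dual.extendRCLike g, extendRCLike_apply_eq φ g fun a => hgf a, ?_⟩
  intro a ha
  have hIa : ℜ (Complex.I • a) = 0 := by simp [(hP a ha).imaginaryPart]
  have hpos := hg a ((hs a).2 (by rwa [(hP a ha).coe_realPart]))
  have hI := hg (Complex.I • a) ((hs _).2 (by simp [hIa]))
  have hnegI := hg (-(Complex.I • a)) ((hs _).2 (by simp [hIa]))
  rw [map_neg] at hnegI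
  have hgI : g (Complex.I • a) = 0 := le_antisymm (neg_nonneg.1 hnegI) hI
  rw [Complex.nonneg_iff]
  simpa [Module.Dual.extendRCLike_apply, hgI] using hpos

end ComplexModule

def IsVCone.toPointedCone {M : Type} [AddCommGroup M] [Module ℂ M] {C : Set M}
    (hC : IsVCone C) : PointedCone ℝ M where
  carrier := C
  zero_mem' := hC.1
  add_mem' hx hy := hC.2.1 _ hx _ hy
  smul_mem' c x hx := hC.2.2 c c.2 x hx

def constMatrix {V : Type*} [AddCommGroup V] [Module ℂ V] (m n : Type*) :
    V →ₗ[ℂ] Matrix m n V where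
  toFun a := Matrix.of fun _ _ => a
  map_add' _ _ := rfl
  map_smul' _ _ := rfl

namespace LocalOpSys

variable {Γ V : Type} [AddCommGroup V] [Module ℂ V] [StarAddMonoid V] [StarModule ℂ V]

def groundCone (T : LocalOpSys Γ V) (α : Γ) : PointedCone ℝ V :=
  (IsVCone.toPointedCone (T.cone α 1)).comap ((constMatrix (Fin 1) (Fin 1)).restrictScalars ℝ)

lemma mem_groundCone (T : LocalOpSys Γ V) (α : Γ) (a : V) :
    a ∈ T.groundCone α ↔ (Matrix.of fun _ _ => a : Matrix (Fin 1) (Fin 1) V) ∈ T.C α 1 :=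
  Iff.rfl

lemma isSelfAdjoint_of_mem_groundCone (T : LocalOpSys Γ V) (α : Γ) :
    ∀ a ∈ T.groundCone α, IsSelfAdjoint a := fun a ha =>
  congrFun (congrFun (T.herm α 1 _ ((T.mem_groundCone α a).1 ha)) 0) 0

lemma isOrderUnit_groundCone (T : LocalOpSys Γ V) (α : Γ) :
    (T.groundCone α).IsOrderUnit T.e := by
  intro v hv
  obtain ⟨r, hr, hmem⟩ := T.unit α 1 (Matrix.of fun _ _ => v) (by ext i j; exact hv)
  refine ⟨r, hr, (T.mem_groundCone α _).2 ?_⟩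
  convert hmem using 1
  ext i j
  simp [diagE, Subsingleton.elim i j]

end LocalOpSys

/-- local Krein extension: a local positive linear functional on a
local operator system `S` inside a unital Pro-C*-algebra `A` extends to a local
positive linear functional on `A` with the same value at the unit. -/
theorem statement13 {Γ A : Type} [Ring A] [Algebra ℂ A] [StarRing A] [StarModule ℂ A]
    (T : LocalOpSys Γ A) (hTe : T.e = 1)
    (S : Submodule ℂ A) (h1 : (1 : A) ∈ S) (hstar : ∀ a ∈ S, star a ∈ S)
    (φ : S →ₗ[ℂ] ℂ) (α : Γ)
    (hφ : ∀ a : S, (Matrix.of fun _ _ => (a : A) : Matrix (Fin 1) (Fin 1) A) ∈ T.C α 1 →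
      ∃ t : ℝ, 0 ≤ t ∧ φ a = (t : ℂ)) :
    ∃ Φ : A →ₗ[ℂ] ℂ, (∀ a : S, Φ a = φ a) ∧ Φ 1 = φ ⟨1, h1⟩ ∧
      ∃ α' : Γ, ∀ a : A,
        (Matrix.of fun _ _ => a : Matrix (Fin 1) (Fin 1) A) ∈ T.C α' 1 →
        ∃ t : ℝ, 0 ≤ t ∧ Φ a = (t : ℂ) := by
  obtain ⟨Φ, hext, hpos⟩ := exists_nonneg_extension (T.isSelfAdjoint_of_mem_groundCone α)
    (hTe ▸ T.isOrderUnit_groundCone α) h1 hstar φ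
    fun a ha => Complex.nonneg_iff_exists_ofReal.2 (hφ a ((T.mem_groundCone α a).1 ha))
  exact ⟨Φ, hext, hext ⟨1, h1⟩, α, fun a ha =>
    Complex.nonneg_iff_exists_ofReal.1 (hpos a ((T.mem_groundCone α a).2 ha))⟩
end

section
/- Let A be a unital Pro-C*-algebra, S ⊆ A a local operator system, and φ : S → M_n(ℂ) a linear map. The following are equivalent: (1) φ is local completely positive; (2) φ is n-local positive (φ^{(n)} maps C_α^n into M_{n²}(ℂ)^+ for some α); (3) the associated functional s_φ on M_n(S) given by s_φ((a_{ij})) = (1/n) Σ_{i,j} φ(a_{ij})_{(i,j)} is local positive. -/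
open scoped ComplexOrder

/-! Write `x ∈ ℂᵏ ⊗ ℂⁿ` as a `k × n` scalar matrix `X`. Then
`⟨φ⁽ᵏ⁾(M) x, x⟩ = n · s_φ(X* M X)`, and `n · s_φ(N) = ⟨φ⁽ⁿ⁾(N) δ, δ⟩` for `δ = Σᵢ eᵢ ⊗ eᵢ`.
Since each cone `C_α` is stable under the compressions `M ↦ X* M X`, positivity of `s_φ` on
`C_α^n`, of `φ⁽ⁿ⁾` on `C_α^n`, and of every `φ⁽ᵏ⁾` on `C_α^k` are equivalent, for the same `α`. -/

open Matrix

theorem Matrix.posSemidef_of_forall_dotProduct_mulVec_nonneg {ι : Type*} [Fintype ι]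
    [DecidableEq ι] (A : Matrix ι ι ℂ) (h : ∀ x : ι → ℂ, 0 ≤ star x ⬝ᵥ A *ᵥ x) :
    A.PosSemidef := by
  rw [← isPositive_toEuclideanLin_iff, LinearMap.isPositive_iff_complex]
  intro x
  simp only [EuclideanSpace.inner_eq_star_dotProduct, ofLp_toLpLin, toLin'_apply,
    RCLike.re_to_complex]
  obtain ⟨hre, him⟩ := Complex.nonneg_iff.mp (h x.ofLp)
  rw [dotProduct_comm, star_dotProduct]
  refine ⟨Complex.ext ?_ ?_, ?_⟩ <;> simp [← him, hre]

lemma Complex.exists_nonneg_ofReal_eq_iff (z : ℂ) : (∃ t : ℝ, 0 ≤ t ∧ z = t) ↔ 0 ≤ z := by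
  simp [RCLike.nonneg_iff_exists_ofReal (K := ℂ), eq_comm]

lemma Complex.inv_natCast_mul_nonneg_iff {n : ℕ} (hn : 0 < n) {z : ℂ} :
    0 ≤ (n : ℂ)⁻¹ * z ↔ 0 ≤ z :=
  ⟨fun h => by simpa [hn.ne'] using mul_nonneg (Nat.cast_nonneg (α := ℂ) n) h,
    fun h => mul_nonneg (by positivity) h⟩

section Amplification

variable {V : Type} [AddCommGroup V] [Module ℂ V] {n : ℕ}

/-- The functional `n · s_φ` on `M_n(V)`. -/
def diagPairing (φ : V →ₗ[ℂ] Matrix (Fin n) (Fin n) ℂ) (N : Matrix (Fin n) (Fin n) V) : ℂ :=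
  ∑ i, ∑ j, φ (N i j) i j

lemma dotProduct_ampP_mulVec_eq_diagPairing_sconj {k : ℕ}
    (φ : V →ₗ[ℂ] Matrix (Fin n) (Fin n) ℂ) (M : Matrix (Fin k) (Fin k) V)
    (x : Fin k × Fin n → ℂ) :
    star x ⬝ᵥ ampP φ M *ᵥ x = diagPairing φ (sconj (of fun i r => x (i, r)) M) := by
  simp only [diagPairing, sconj, of_apply, map_sum, map_smul, Matrix.sum_apply,
    Matrix.smul_apply, smul_eq_mul, dotProduct, mulVec, ampP, Pi.star_apply, Finset.mul_sum,
    Fintype.sum_prod_type, RCLike.star_def]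
  rw [Finset.sum_comm]
  refine Finset.sum_congr rfl fun p _ => ?_
  rw [Finset.sum_congr rfl fun i _ => Finset.sum_comm, Finset.sum_comm]
  refine Finset.sum_congr rfl fun q _ => Finset.sum_congr rfl fun i _ =>
    Finset.sum_congr rfl fun j _ => by ring

lemma diagPairing_eq_dotProduct_ampP_mulVec (φ : V →ₗ[ℂ] Matrix (Fin n) (Fin n) ℂ)
    (N : Matrix (Fin n) (Fin n) V) :
    diagPairing φ N = star (fun pr : Fin n × Fin n => if pr.1 = pr.2 then (1 : ℂ) else 0) ⬝ᵥ
      ampP φ N *ᵥ fun pr => if pr.1 = pr.2 then 1 else 0 := by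
  simp only [diagPairing, dotProduct, mulVec, ampP, of_apply, Pi.star_apply,
    Fintype.sum_prod_type, apply_ite star, star_one, star_zero, ite_mul, mul_ite, one_mul,
    mul_one, zero_mul, mul_zero, Finset.sum_ite_eq, Finset.mem_univ, if_true]

lemma diagPairing_nonneg_of_posSemidef {φ : V →ₗ[ℂ] Matrix (Fin n) (Fin n) ℂ}
    {N : Matrix (Fin n) (Fin n) V} (h : (ampP φ N).PosSemidef) : 0 ≤ diagPairing φ N :=
  diagPairing_eq_dotProduct_ampP_mulVec φ N ▸ h.dotProduct_mulVec_nonneg _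

lemma ampP_posSemidef_of_diagPairing_sconj_nonneg {k : ℕ}
    {φ : V →ₗ[ℂ] Matrix (Fin n) (Fin n) ℂ} {M : Matrix (Fin k) (Fin k) V}
    (h : ∀ X : Matrix (Fin k) (Fin n) ℂ, 0 ≤ diagPairing φ (sconj X M)) :
    (ampP φ M).PosSemidef :=
  posSemidef_of_forall_dotProduct_mulVec_nonneg _ fun x =>
    dotProduct_ampP_mulVec_eq_diagPairing_sconj φ M x ▸ h _

end Amplification

namespace LMOrder

variable {Γ V : Type} [AddCommGroup V] [Module ℂ V] [StarAddMonoid V] [StarModule ℂ V]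
  (O : LMOrder Γ V) {n : ℕ} (φ : V →ₗ[ℂ] Matrix (Fin n) (Fin n) ℂ) (α : Γ)

lemma ampP_posSemidef_of_diagPairing_nonneg
    (h : ∀ N ∈ O.C α n, 0 ≤ diagPairing φ N) (k : ℕ) (M : Matrix (Fin k) (Fin k) V)
    (hM : M ∈ O.C α k) : (ampP φ M).PosSemidef :=
  ampP_posSemidef_of_diagPairing_sconj_nonneg fun X => h _ (O.compat α k n X M hM)

lemma forall_ampP_posSemidef_iff_forall_diagPairing_nonneg :
    (∀ N ∈ O.C α n, (ampP φ N).PosSemidef) ↔ ∀ N ∈ O.C α n, 0 ≤ diagPairing φ N :=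
  ⟨fun h N hN => diagPairing_nonneg_of_posSemidef (h N hN),
    fun h => O.ampP_posSemidef_of_diagPairing_nonneg φ α h n⟩

end LMOrder

/-- for a linear map `φ : S → M_n(ℂ)` on a local operator system the
following are equivalent: (1) `φ` is local completely positive; (2) `φ` is `n`-local
positive; (3) the associated functional `s_φ` is local positive. -/
theorem statement14 {Γ V : Type} [AddCommGroup V] [Module ℂ V] [StarAddMonoid V]
    [StarModule ℂ V] (S : LocalOpSys Γ V) (n : ℕ) (hn : 0 < n)
    (φ : V →ₗ[ℂ] Matrix (Fin n) (Fin n) ℂ) :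
    ((∃ α : Γ, ∀ (k : ℕ) (M : Matrix (Fin k) (Fin k) V),
        M ∈ S.C α k → (ampP φ M).PosSemidef) ↔
      (∃ α : Γ, ∀ M : Matrix (Fin n) (Fin n) V,
        M ∈ S.C α n → (ampP φ M).PosSemidef)) ∧
    ((∃ α : Γ, ∀ M : Matrix (Fin n) (Fin n) V,
        M ∈ S.C α n → (ampP φ M).PosSemidef) ↔
      (∃ α : Γ, ∀ M : Matrix (Fin n) (Fin n) V, M ∈ S.C α n →
        ∃ t : ℝ, 0 ≤ t ∧ ((n : ℂ))⁻¹ * ∑ i, ∑ j, φ (M i j) i j = (t : ℂ))) := by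
  have hlevel := S.forall_ampP_posSemidef_iff_forall_diagPairing_nonneg φ
  refine ⟨⟨fun ⟨α, h⟩ => ⟨α, h n⟩, fun ⟨α, h⟩ => ⟨α, ?_⟩⟩, exists_congr fun α => ?_⟩
  · exact S.ampP_posSemidef_of_diagPairing_nonneg φ α ((hlevel α).mp h)
  · refine (hlevel α).trans (forall₂_congr fun M _ => ?_)
    rw [Complex.exists_nonneg_ofReal_eq_iff, Complex.inv_natCast_mul_nonneg_iff hn]
    rfl
end

section
/- Let V and W be local operator systems and let τ = {T_γ^n} be any local operator system tensor product structure on V ⊗ W. If φ : V → M_n(ℂ) and ψ : W → M_m(ℂ) are local completely positive (not necessarily unital) maps with respect to cones C_α and D_β respectively, then φ ⊗ ψ : V ⊗_τ W → M_{nm}(ℂ) is local completely positive with respect to T_{(α,β)}. -/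
open scoped ComplexOrder

open scoped TensorProduct

/-- The Kronecker bilinear map `M_n(ℂ) × M_m(ℂ) → M_{nm}(ℂ)`. -/
noncomputable def entryBil (n m : ℕ) : Matrix (Fin n) (Fin n) ℂ →ₗ[ℂ] Matrix (Fin m) (Fin m) ℂ →ₗ[ℂ]
    Matrix (Fin n × Fin m) (Fin n × Fin m) ℂ :=
  LinearMap.mk₂ ℂ (fun a b => Matrix.of fun p q => a p.1 q.1 * b p.2 q.2)
    (fun a a' b => by ext p q; simp [Matrix.add_apply, add_mul])
    (fun c a b => by ext p q; simp [Matrix.smul_apply, smul_eq_mul]; ring)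
    (fun a b b' => by ext p q; simp [Matrix.add_apply, mul_add])
    (fun c a b => by ext p q; simp [Matrix.smul_apply, smul_eq_mul]; ring)

/-- The linearization `φ ⊗ ψ : V ⊗ W → M_{nm}(ℂ)` of two matrix-valued maps. -/
noncomputable def tpmap {V W : Type} [AddCommGroup V] [Module ℂ V] [AddCommGroup W] [Module ℂ W]
    {n m : ℕ} (φ : V →ₗ[ℂ] Matrix (Fin n) (Fin n) ℂ)
    (ψ : W →ₗ[ℂ] Matrix (Fin m) (Fin m) ℂ) :
    (V ⊗[ℂ] W) →ₗ[ℂ] Matrix (Fin n × Fin m) (Fin n × Fin m) ℂ :=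
  TensorProduct.lift (((entryBil n m).comp φ).compl₂ ψ)

/-- The Kronecker tensor of a `V`-matrix and a `W`-matrix. -/
noncomputable def kron {V W : Type} [AddCommGroup V] [Module ℂ V] [AddCommGroup W] [Module ℂ W]
    {k l : ℕ} (P : Matrix (Fin k) (Fin k) V) (Q : Matrix (Fin l) (Fin l) W) :
    Matrix (Fin (k * l)) (Fin (k * l)) (V ⊗[ℂ] W) :=
  Matrix.reindex finProdFinEquiv finProdFinEquiv
    (Matrix.of fun (p q : Fin k × Fin l) => P p.1 q.1 ⊗ₜ[ℂ] Q p.2 q.2)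

/-!
Perturb `φ` to `φₜ = φ + t · tr (φ (·)) · 1` for `t > 0`. This is still local completely
positive, and `φₜ e` is positive definite unless `φ e = 0`, in which case the order unit forces
`φ = 0`. With `A = (φₜ e)^{1/2}` the map `A⁻¹ φₜ(·) A⁻¹` is unital local completely positive, so
`φₜ ⊗ ψₜ = (A ⊗ B)ᴴ (φ₁ ⊗ ψ₁)(·) (A ⊗ B)` is local completely positive by the defining property of
the tensor product structure. The amplification of `φₜ ⊗ ψₜ` is a polynomial in `t`, and the
positive semidefinite cone is closed, so letting `t → 0` gives the claim.
-/
open scoped ComplexOrder Kronecker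
open Matrix

section Amplification

variable {S : Type} [AddCommGroup S] [Module ℂ S] {ι : Type} [Fintype ι] {k : ℕ}

lemma ampP_add (φ φ' : S →ₗ[ℂ] Matrix ι ι ℂ) (M : Matrix (Fin k) (Fin k) S) :
    ampP (φ + φ') M = ampP φ M + ampP φ' M := rfl

lemma ampP_smul (c : ℂ) (φ : S →ₗ[ℂ] Matrix ι ι ℂ) (M : Matrix (Fin k) (Fin k) S) :
    ampP (c • φ) M = c • ampP φ M := rfl

lemma ampP_zero (M : Matrix (Fin k) (Fin k) S) : ampP (0 : S →ₗ[ℂ] Matrix ι ι ℂ) M = 0 := rfl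

lemma ampP_mulLeftRight_comp [DecidableEq ι] (Y X : Matrix ι ι ℂ) (φ : S →ₗ[ℂ] Matrix ι ι ℂ)
    (M : Matrix (Fin k) (Fin k) S) :
    ampP (LinearMap.mulLeftRight ℂ (Y, X) ∘ₗ φ) M =
      ((1 : Matrix (Fin k) (Fin k) ℂ) ⊗ₖ Y) * ampP φ M * ((1 : Matrix (Fin k) (Fin k) ℂ) ⊗ₖ X) := by
  ext ⟨i, p⟩ ⟨j, q⟩
  simp [ampP, Matrix.mul_apply, Fintype.sum_prod_type, one_apply, Finset.sum_mul, ite_mul, mul_ite]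

end Amplification

section LocalCP

variable {S : Type} [AddCommGroup S] [Module ℂ S] {ι : Type} [Fintype ι]

def IsLocalCP (C : (k : ℕ) → Set (Matrix (Fin k) (Fin k) S)) (φ : S →ₗ[ℂ] Matrix ι ι ℂ) : Prop :=
  ∀ (k : ℕ) (M : Matrix (Fin k) (Fin k) S), M ∈ C k → (ampP φ M).PosSemidef

variable {C : (k : ℕ) → Set (Matrix (Fin k) (Fin k) S)} {φ ψ : S →ₗ[ℂ] Matrix ι ι ℂ}

lemma IsLocalCP.add (hφ : IsLocalCP C φ) (hψ : IsLocalCP C ψ) : IsLocalCP C (φ + ψ) :=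
  fun k M hM => (hφ k M hM).add (hψ k M hM)

lemma IsLocalCP.smul (hφ : IsLocalCP C φ) {c : ℂ} (hc : 0 ≤ c) : IsLocalCP C (c • φ) :=
  fun k M hM => (hφ k M hM).smul hc

lemma IsLocalCP.mulLeftRight_comp [DecidableEq ι] (hφ : IsLocalCP C φ) (X : Matrix ι ι ℂ) :
    IsLocalCP C (LinearMap.mulLeftRight ℂ (Xᴴ, X) ∘ₗ φ) := fun k M hM => by
  rw [ampP_mulLeftRight_comp, ← conjTranspose_one, ← conjTranspose_kronecker, conjTranspose_one]
  exact (hφ k M hM).conjTranspose_mul_mul_same _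

lemma IsLocalCP.posSemidef_apply (hφ : IsLocalCP C φ) {x : S}
    (hx : Matrix.of (fun _ _ => x) ∈ C 1) : (φ x).PosSemidef :=
  (hφ 1 _ hx).submatrix fun i => (0, i)

end LocalCP

section TraceSmulOne

variable {S : Type} [AddCommGroup S] [Module ℂ S] {ι : Type} [Fintype ι] [DecidableEq ι]

def traceSmulOne (φ : S →ₗ[ℂ] Matrix ι ι ℂ) : S →ₗ[ℂ] Matrix ι ι ℂ :=
  (traceLinearMap ι ℂ ℂ ∘ₗ φ).smulRight 1

lemma traceSmulOne_apply (φ : S →ₗ[ℂ] Matrix ι ι ℂ) (x : S) :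
    traceSmulOne φ x = (φ x).trace • 1 := rfl

lemma ampP_traceSmulOne {k : ℕ} (φ : S →ₗ[ℂ] Matrix ι ι ℂ) (M : Matrix (Fin k) (Fin k) S) :
    ampP (traceSmulOne φ) M = (∑ r, (ampP φ M).submatrix (·, r) (·, r)) ⊗ₖ 1 := by
  ext ⟨i, p⟩ ⟨j, q⟩
  simp [ampP, traceSmulOne_apply, Matrix.trace, Matrix.sum_apply]

lemma IsLocalCP.traceSmulOne {C : (k : ℕ) → Set (Matrix (Fin k) (Fin k) S)}
    {φ : S →ₗ[ℂ] Matrix ι ι ℂ} (hφ : IsLocalCP C φ) : IsLocalCP C (traceSmulOne φ) :=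
  fun k M hM => by
    rw [ampP_traceSmulOne]
    exact (posSemidef_sum _ fun r _ => (hφ k M hM).submatrix _).kronecker .one

end TraceSmulOne

section Unitalization

variable {S : Type} [AddCommGroup S] [Module ℂ S] {ι : Type} [Fintype ι] [DecidableEq ι]
  {C : (k : ℕ) → Set (Matrix (Fin k) (Fin k) S)} {φ : S →ₗ[ℂ] Matrix ι ι ℂ}

open scoped MatrixOrder in
lemma IsLocalCP.exists_unital_of_posDef (hφ : IsLocalCP C φ) {e : S} (he : (φ e).PosDef) :
    ∃ (φ₁ : S →ₗ[ℂ] Matrix ι ι ℂ) (A : Matrix ι ι ℂ), φ₁ e = 1 ∧ IsLocalCP C φ₁ ∧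
      φ = LinearMap.mulLeftRight ℂ (Aᴴ, A) ∘ₗ φ₁ := by
  set A := CFC.sqrt (φ e)
  have hAH : Aᴴ = A := (CFC.sqrt_nonneg _).posSemidef.1
  have hAA : A * A = φ e := CFC.sqrt_mul_sqrt_self _ he.posSemidef.nonneg
  have hA : IsUnit A.det := (isUnit_iff_isUnit_det A).1 <|
    (CFC.isUnit_sqrt_iff _ he.posSemidef.nonneg).2 he.isUnit
  have hinvH : (A⁻¹)ᴴ = A⁻¹ := by rw [conjTranspose_nonsing_inv, hAH]
  refine ⟨LinearMap.mulLeftRight ℂ ((A⁻¹)ᴴ, A⁻¹) ∘ₗ φ, A, ?_, hφ.mulLeftRight_comp _, ?_⟩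
  · simp only [LinearMap.comp_apply, LinearMap.mulLeftRight_apply, hinvH, ← hAA]
    rw [← Matrix.mul_assoc, nonsing_inv_mul _ hA, Matrix.one_mul, mul_nonsing_inv _ hA]
  · ext1 x
    simp only [LinearMap.comp_apply, LinearMap.mulLeftRight_apply, hinvH, hAH]
    rw [← Matrix.mul_assoc, ← Matrix.mul_assoc, mul_nonsing_inv _ hA, Matrix.one_mul,
      Matrix.mul_assoc, nonsing_inv_mul _ hA, Matrix.mul_one]

end Unitalization

section TensorMap

open scoped TensorProduct

variable {V W : Type} [AddCommGroup V] [Module ℂ V] [AddCommGroup W] [Module ℂ W] {n m : ℕ}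

@[simp]
lemma tpmap_tmul (φ : V →ₗ[ℂ] Matrix (Fin n) (Fin n) ℂ) (ψ : W →ₗ[ℂ] Matrix (Fin m) (Fin m) ℂ)
    (x : V) (y : W) : tpmap φ ψ (x ⊗ₜ y) = φ x ⊗ₖ ψ y := rfl

lemma tpmap_add_left (φ φ' : V →ₗ[ℂ] Matrix (Fin n) (Fin n) ℂ)
    (ψ : W →ₗ[ℂ] Matrix (Fin m) (Fin m) ℂ) : tpmap (φ + φ') ψ = tpmap φ ψ + tpmap φ' ψ :=
  TensorProduct.ext' fun x y => by simp [add_kronecker]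

lemma tpmap_add_right (φ : V →ₗ[ℂ] Matrix (Fin n) (Fin n) ℂ)
    (ψ ψ' : W →ₗ[ℂ] Matrix (Fin m) (Fin m) ℂ) : tpmap φ (ψ + ψ') = tpmap φ ψ + tpmap φ ψ' :=
  TensorProduct.ext' fun x y => by simp [kronecker_add]

lemma tpmap_smul_left (c : ℂ) (φ : V →ₗ[ℂ] Matrix (Fin n) (Fin n) ℂ)
    (ψ : W →ₗ[ℂ] Matrix (Fin m) (Fin m) ℂ) : tpmap (c • φ) ψ = c • tpmap φ ψ :=
  TensorProduct.ext' fun x y => by simp [smul_kronecker]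

lemma tpmap_smul_right (c : ℂ) (φ : V →ₗ[ℂ] Matrix (Fin n) (Fin n) ℂ)
    (ψ : W →ₗ[ℂ] Matrix (Fin m) (Fin m) ℂ) : tpmap φ (c • ψ) = c • tpmap φ ψ :=
  TensorProduct.ext' fun x y => by simp [kronecker_smul]

@[simp]
lemma tpmap_zero_left (ψ : W →ₗ[ℂ] Matrix (Fin m) (Fin m) ℂ) :
    tpmap (0 : V →ₗ[ℂ] Matrix (Fin n) (Fin n) ℂ) ψ = 0 :=
  TensorProduct.ext' fun x y => by simp

@[simp]
lemma tpmap_zero_right (φ : V →ₗ[ℂ] Matrix (Fin n) (Fin n) ℂ) :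
    tpmap φ (0 : W →ₗ[ℂ] Matrix (Fin m) (Fin m) ℂ) = 0 :=
  TensorProduct.ext' fun x y => by simp

lemma tpmap_mulLeftRight_comp (A A' : Matrix (Fin n) (Fin n) ℂ) (B B' : Matrix (Fin m) (Fin m) ℂ)
    (φ : V →ₗ[ℂ] Matrix (Fin n) (Fin n) ℂ) (ψ : W →ₗ[ℂ] Matrix (Fin m) (Fin m) ℂ) :
    tpmap (LinearMap.mulLeftRight ℂ (A, A') ∘ₗ φ) (LinearMap.mulLeftRight ℂ (B, B') ∘ₗ ψ) =
      LinearMap.mulLeftRight ℂ (A ⊗ₖ B, A' ⊗ₖ B') ∘ₗ tpmap φ ψ :=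
  TensorProduct.ext' fun x y => by simp [mul_kronecker_mul]

end TensorMap

section Closed

open Filter Topology

variable {ι : Type} [Fintype ι]

lemma isClosed_setOf_posSemidef : IsClosed {A : Matrix ι ι ℂ | A.PosSemidef} := by
  simp only [posSemidef_iff_dotProduct_mulVec, Set.ofPred_and, Set.ofPred_forall]
  refine (isClosed_eq continuous_id.matrix_conjTranspose continuous_id).inter
    (isClosed_iInter fun x => isClosed_le continuous_const ?_)
  fun_prop

lemma posSemidef_of_forall_pos_posSemidef_add {N F H : Matrix ι ι ℂ}
    (h : ∀ t : ℝ, 0 < t → (N + (t : ℂ) • F + (t : ℂ) ^ 2 • H).PosSemidef) : N.PosSemidef := by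
  have hcont : Continuous fun t : ℝ => N + (t : ℂ) • F + (t : ℂ) ^ 2 • H := by fun_prop
  have hlim : Tendsto (fun t : ℝ => N + (t : ℂ) • F + (t : ℂ) ^ 2 • H) (𝓝[>] 0) (𝓝 N) := by
    simpa using (hcont.tendsto 0).mono_left nhdsWithin_le_nhds
  exact isClosed_setOf_posSemidef.mem_of_tendsto hlim (eventually_nhdsWithin_of_forall h)

end Closed

namespace LocalOpSys

variable {Γ V : Type} [AddCommGroup V] [Module ℂ V] [StarAddMonoid V] [StarModule ℂ V]
  (S : LocalOpSys Γ V) (α : Γ)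

lemma exists_smul_unit_sub_mem {x : V} (hx : star x = x) :
    ∃ r : ℝ, 0 < r ∧ Matrix.of (fun _ _ => (r : ℂ) • S.e - x) ∈ S.C α 1 := by
  obtain ⟨r, hr, hmem⟩ := S.unit α 1 (Matrix.of fun _ _ => x) (by ext; simp [hx])
  refine ⟨r, hr, ?_⟩
  convert hmem using 1
  ext i j
  simp [diagE, Subsingleton.elim i j]

variable {S α} {ι : Type} [Fintype ι] {φ : V →ₗ[ℂ] Matrix ι ι ℂ}

lemma posSemidef_map_unit (hφ : IsLocalCP (S.C α) φ) : (φ S.e).PosSemidef := by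
  obtain ⟨r, hr, hmem⟩ := S.exists_smul_unit_sub_mem α (x := -S.e) (by rw [star_neg, S.eherm])
  have hpos : (0 : ℝ) < r + 1 := by positivity
  have h := (hφ.posSemidef_apply hmem).smul (inv_nonneg.mpr hpos.le)
  have hφe : φ ((r : ℂ) • S.e - -S.e) = ((r + 1 : ℝ) : ℂ) • φ S.e := by
    rw [sub_neg_eq_add, map_add, map_smul]; push_cast; module
  rwa [hφe, ← Complex.coe_smul, smul_smul, ← Complex.ofReal_mul, inv_mul_cancel₀ hpos.ne',
    Complex.ofReal_one, one_smul] at h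

open scoped MatrixOrder in
lemma eq_zero_of_map_unit_eq_zero (hφ : IsLocalCP (S.C α) φ) (h0 : φ S.e = 0) : φ = 0 := by
  have hsa : ∀ x : V, IsSelfAdjoint x → φ x = 0 := fun x hx => by
    obtain ⟨r, -, hr⟩ := S.exists_smul_unit_sub_mem α hx.star_eq
    obtain ⟨r', -, hr'⟩ := S.exists_smul_unit_sub_mem α (x := -x) (by rw [star_neg, hx.star_eq])
    have hle := hφ.posSemidef_apply hr
    have hge := hφ.posSemidef_apply hr'
    simp only [sub_neg_eq_add, map_sub, map_add, map_smul, h0, smul_zero, zero_sub, zero_add]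
      at hle hge
    exact le_antisymm (by rwa [le_iff, zero_sub]) hge.nonneg
  ext1 x
  rw [← realPart_add_I_smul_imaginaryPart x, map_add, map_smul, hsa _ (realPart x).2,
    hsa _ (imaginaryPart x).2, smul_zero, add_zero, LinearMap.zero_apply]

lemma posDef_map_unit_add_traceSmulOne [DecidableEq ι] (hφ : IsLocalCP (S.C α) φ)
    (hne : φ S.e ≠ 0) {t : ℝ} (ht : 0 < t) : ((φ + (t : ℂ) • traceSmulOne φ) S.e).PosDef := by
  have hP := posSemidef_map_unit hφ
  have htr : 0 < (φ S.e).trace := hP.trace_nonneg.lt_of_ne' (hP.trace_eq_zero_iff.not.2 hne)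
  simp only [LinearMap.add_apply, LinearMap.smul_apply, traceSmulOne_apply, smul_smul]
  exact PosDef.posSemidef_add hP (PosDef.one.smul (mul_pos (by exact_mod_cast ht) htr))

end LocalOpSys

theorem statement17_general {Γ Λ V W : Type} [AddCommGroup V] [Module ℂ V] [StarAddMonoid V]
    [StarModule ℂ V] [AddCommGroup W] [Module ℂ W] [StarAddMonoid W] [StarModule ℂ W]
    (Sv : LocalOpSys Γ V) (Sw : LocalOpSys Λ W)
    (T : Γ × Λ → (n : ℕ) → Set (Matrix (Fin n) (Fin n) (V ⊗[ℂ] W)))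
    (hT3 : ∀ (α : Γ) (β : Λ) (n' m' : ℕ)
      (φ1 : V →ₗ[ℂ] Matrix (Fin n') (Fin n') ℂ)
      (ψ1 : W →ₗ[ℂ] Matrix (Fin m') (Fin m') ℂ),
      φ1 Sv.e = 1 → ψ1 Sw.e = 1 →
      (∀ (k : ℕ) (M : Matrix (Fin k) (Fin k) V),
        M ∈ Sv.C α k → (ampP φ1 M).PosSemidef) →
      (∀ (k : ℕ) (M : Matrix (Fin k) (Fin k) W),
        M ∈ Sw.C β k → (ampP ψ1 M).PosSemidef) →
      ∀ (k : ℕ) (M : Matrix (Fin k) (Fin k) (V ⊗[ℂ] W)), M ∈ T (α, β) k →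
        (ampP (tpmap φ1 ψ1) M).PosSemidef)
    {n m : ℕ} (φ : V →ₗ[ℂ] Matrix (Fin n) (Fin n) ℂ)
    (ψ : W →ₗ[ℂ] Matrix (Fin m) (Fin m) ℂ) (α : Γ) (β : Λ)
    (hφ : ∀ (k : ℕ) (M : Matrix (Fin k) (Fin k) V),
      M ∈ Sv.C α k → (ampP φ M).PosSemidef)
    (hψ : ∀ (k : ℕ) (M : Matrix (Fin k) (Fin k) W),
      M ∈ Sw.C β k → (ampP ψ M).PosSemidef) :
    ∀ (k : ℕ) (M : Matrix (Fin k) (Fin k) (V ⊗[ℂ] W)), M ∈ T (α, β) k →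
      (ampP (tpmap φ ψ) M).PosSemidef := by
  intro k M hM
  by_cases hφe : φ Sv.e = 0
  · rw [LocalOpSys.eq_zero_of_map_unit_eq_zero hφ hφe, tpmap_zero_left, ampP_zero]
    exact .zero
  by_cases hψe : ψ Sw.e = 0
  · rw [LocalOpSys.eq_zero_of_map_unit_eq_zero hψ hψe, tpmap_zero_right, ampP_zero]
    exact .zero
  refine posSemidef_of_forall_pos_posSemidef_add
    (F := ampP (tpmap (traceSmulOne φ) ψ) M + ampP (tpmap φ (traceSmulOne ψ)) M)
    (H := ampP (tpmap (traceSmulOne φ) (traceSmulOne ψ)) M) fun t ht => ?_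
  have ht' : 0 ≤ (t : ℂ) := Complex.zero_le_real.2 ht.le
  obtain ⟨φ₁, A, hφ₁e, hφ₁, hφA⟩ := (IsLocalCP.add hφ ((IsLocalCP.traceSmulOne hφ).smul ht'))
    |>.exists_unital_of_posDef (LocalOpSys.posDef_map_unit_add_traceSmulOne hφ hφe ht)
  obtain ⟨ψ₁, B, hψ₁e, hψ₁, hψB⟩ := (IsLocalCP.add hψ ((IsLocalCP.traceSmulOne hψ).smul ht'))
    |>.exists_unital_of_posDef (LocalOpSys.posDef_map_unit_add_traceSmulOne hψ hψe ht)
  have hcp : IsLocalCP (T (α, β))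
      (tpmap (φ + (t : ℂ) • traceSmulOne φ) (ψ + (t : ℂ) • traceSmulOne ψ)) := by
    rw [hφA, hψB, tpmap_mulLeftRight_comp, ← conjTranspose_kronecker]
    exact IsLocalCP.mulLeftRight_comp (hT3 α β n m φ₁ ψ₁ hφ₁e hψ₁e hφ₁ hψ₁) _
  convert hcp k M hM using 1
  simp only [tpmap_add_left, tpmap_add_right, tpmap_smul_left, tpmap_smul_right, ampP_add,
    ampP_smul]
  module

/-- for any local operator system tensor product structure `τ` on
`V ⊗ W`, the tensor of (not necessarily unital) local completely positive maps into
matrix algebras is local completely positive on `V ⊗_τ W`. -/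
theorem statement17 {Γ Λ V W : Type} [AddCommGroup V] [Module ℂ V] [StarAddMonoid V]
    [StarModule ℂ V] [AddCommGroup W] [Module ℂ W] [StarAddMonoid W] [StarModule ℂ W]
    (Sv : LocalOpSys Γ V) (Sw : LocalOpSys Λ W)
    (T : Γ × Λ → (n : ℕ) → Set (Matrix (Fin n) (Fin n) (V ⊗[ℂ] W)))
    (hTcone : ∀ γ n, IsVCone (T γ n))
    (hTcompat : ∀ (γ : Γ × Λ) (n m : ℕ) (X : Matrix (Fin n) (Fin m) ℂ),
      ∀ M ∈ T γ n, sconj X M ∈ T γ m)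
    (hT2 : ∀ (α : Γ) (β : Λ) (k l : ℕ), ∀ P ∈ Sv.C α k, ∀ Q ∈ Sw.C β l,
      kron P Q ∈ T (α, β) (k * l))
    (hT3 : ∀ (α : Γ) (β : Λ) (n' m' : ℕ)
      (φ1 : V →ₗ[ℂ] Matrix (Fin n') (Fin n') ℂ)
      (ψ1 : W →ₗ[ℂ] Matrix (Fin m') (Fin m') ℂ),
      φ1 Sv.e = 1 → ψ1 Sw.e = 1 →
      (∀ (k : ℕ) (M : Matrix (Fin k) (Fin k) V),
        M ∈ Sv.C α k → (ampP φ1 M).PosSemidef) →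
      (∀ (k : ℕ) (M : Matrix (Fin k) (Fin k) W),
        M ∈ Sw.C β k → (ampP ψ1 M).PosSemidef) →
      ∀ (k : ℕ) (M : Matrix (Fin k) (Fin k) (V ⊗[ℂ] W)), M ∈ T (α, β) k →
        (ampP (tpmap φ1 ψ1) M).PosSemidef)
    {n m : ℕ} (φ : V →ₗ[ℂ] Matrix (Fin n) (Fin n) ℂ)
    (ψ : W →ₗ[ℂ] Matrix (Fin m) (Fin m) ℂ) (α : Γ) (β : Λ)
    (hφ : ∀ (k : ℕ) (M : Matrix (Fin k) (Fin k) V),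
      M ∈ Sv.C α k → (ampP φ M).PosSemidef)
    (hψ : ∀ (k : ℕ) (M : Matrix (Fin k) (Fin k) W),
      M ∈ Sw.C β k → (ampP ψ M).PosSemidef) :
    ∀ (k : ℕ) (M : Matrix (Fin k) (Fin k) (V ⊗[ℂ] W)), M ∈ T (α, β) k →
      (ampP (tpmap φ ψ) M).PosSemidef :=
  statement17_general Sv Sw T hT3 φ ψ α β hφ hψ
end

section
/- Let V and W be local operator systems with cone families {C_α^n} and {D_β^n}. Suppose {T_γ^n : γ ∈ Ω} is any compatible collection of cones T_γ^n ⊆ M_n(V ⊗ W) (X* T_γ^m X ⊆ T_γ^n for scalar matrices X) such that for every γ there exist α, β with C_α^k ⊗ D_β^m ⊆ T_γ^{km} for all k, m. Then for each γ there exist (α, β) with K_{(α,β)}^{n(lmax)} ⊆ T_γ^n for every n, where K_{(α,β)}^{n(lmax)} = { λ (P ⊗ Q) λ* : P ∈ C_α^k, Q ∈ D_β^m, λ ∈ M_{n,km}(ℂ), k, m ∈ ℕ }. Consequently lmax is the maximal local operator system tensor product. -/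
open scoped ComplexOrder

open scoped TensorProduct

/-- Conjugation `L M Lᴴ` of a module-valued matrix by a scalar matrix `L`. -/
def oconj {M : Type} [AddCommGroup M] [Module ℂ M] {n N : ℕ}
    (L : Matrix (Fin n) (Fin N) ℂ) (A : Matrix (Fin N) (Fin N) M) :
    Matrix (Fin n) (Fin n) M :=
  Matrix.of fun i j => ∑ p, ∑ q, (L i p * (starRingEnd ℂ) (L j q)) • A p q

theorem oconj_eq_sconj_conjTranspose {M : Type} [AddCommGroup M] [Module ℂ M] {n N : ℕ}
    (L : Matrix (Fin n) (Fin N) ℂ) (A : Matrix (Fin N) (Fin N) M) :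
    oconj L A = sconj L.conjTranspose A := by
  ext i j
  simp [oconj, sconj, Matrix.conjTranspose_apply]

theorem statement19_general {Γ Λ Ω V W : Type} [AddCommGroup V] [Module ℂ V] [StarAddMonoid V]
    [StarModule ℂ V] [AddCommGroup W] [Module ℂ W] [StarAddMonoid W] [StarModule ℂ W]
    (Sv : LMOrder Γ V) (Sw : LMOrder Λ W)
    (T : Ω → (n : ℕ) → Set (Matrix (Fin n) (Fin n) (V ⊗[ℂ] W)))
    (hTcompat : ∀ (γ : Ω) (n m : ℕ) (X : Matrix (Fin n) (Fin m) ℂ),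
      ∀ M ∈ T γ n, sconj X M ∈ T γ m)
    (hT2 : ∀ γ : Ω, ∃ (α : Γ) (β : Λ), ∀ (k l : ℕ), ∀ P ∈ Sv.C α k, ∀ Q ∈ Sw.C β l,
      kron P Q ∈ T γ (k * l)) :
    ∀ γ : Ω, ∃ (α : Γ) (β : Λ), ∀ (n : ℕ)
      (M : Matrix (Fin n) (Fin n) (V ⊗[ℂ] W)),
      (∃ (k l : ℕ) (P : Matrix (Fin k) (Fin k) V) (Q : Matrix (Fin l) (Fin l) W)
        (L : Matrix (Fin n) (Fin (k * l)) ℂ),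
        P ∈ Sv.C α k ∧ Q ∈ Sw.C β l ∧ M = oconj L (kron P Q)) →
      M ∈ T γ n := by
  intro γ
  obtain ⟨α, β, hkron⟩ := hT2 γ
  refine ⟨α, β, fun n M ⟨k, l, P, Q, L, hP, hQ, hM⟩ => ?_⟩
  rw [hM, oconj_eq_sconj_conjTranspose]
  exact hTcompat γ _ _ L.conjTranspose _ (hkron k l P hP Q hQ)

/-- any compatible cone family on `V ⊗ W` containing the tensors of the
cones contains the maximal cones `K^{n(lmax)}_{(α,β)}`; hence lmax is the maximal
local operator system tensor product. -/
theorem statement19 {Γ Λ Ω V W : Type} [AddCommGroup V] [Module ℂ V] [StarAddMonoid V]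
    [StarModule ℂ V] [AddCommGroup W] [Module ℂ W] [StarAddMonoid W] [StarModule ℂ W]
    (Sv : LMOrder Γ V) (Sw : LMOrder Λ W)
    (T : Ω → (n : ℕ) → Set (Matrix (Fin n) (Fin n) (V ⊗[ℂ] W)))
    (hTcone : ∀ γ n, IsVCone (T γ n))
    (hTcompat : ∀ (γ : Ω) (n m : ℕ) (X : Matrix (Fin n) (Fin m) ℂ),
      ∀ M ∈ T γ n, sconj X M ∈ T γ m)
    (hT2 : ∀ γ : Ω, ∃ (α : Γ) (β : Λ), ∀ (k l : ℕ), ∀ P ∈ Sv.C α k, ∀ Q ∈ Sw.C β l,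
      kron P Q ∈ T γ (k * l)) :
    ∀ γ : Ω, ∃ (α : Γ) (β : Λ), ∀ (n : ℕ)
      (M : Matrix (Fin n) (Fin n) (V ⊗[ℂ] W)),
      (∃ (k l : ℕ) (P : Matrix (Fin k) (Fin k) V) (Q : Matrix (Fin l) (Fin l) W)
        (L : Matrix (Fin n) (Fin (k * l)) ℂ),
        P ∈ Sv.C α k ∧ Q ∈ Sw.C β l ∧ M = oconj L (kron P Q)) →
      M ∈ T γ n :=
  statement19_general Sv Sw T hTcompat hT2
end
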